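/- arXiv:2107.10920 — 5 statements merged into one kernel-verified Lean document; each statement's English description precedes it below -/
import Mathlib

section
/- Let λ be an infinite set, N ∈ ℕ, and c : λ → Fin N a coloring. Let F = {a ∈ λ : c⁻¹(c(a)) is finite}. Suppose Y ⊆ λ^k is mutually algebraic and is invariant under every color-preserving bijection of λ, i.e., for every bijection σ : λ → λ with c ∘ σ = c and every tuple ā ∈ λ^k, ā ∈ Y if and only if σ ∘ ā ∈ Y. Then Y ⊆ F^k ∪ Δ_k. -/
open FirstOrder

/-!
Suppose `x ∈ Y` has a coordinate `a` whose colour class is infinite and another coordinate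
`b ≠ a`. For each `a'` of the colour of `a` outside the range of `x`, the transposition
`(a a')` preserves the colouring, so `(a a') ∘ x ∈ Y`; these tuples are pairwise distinct
(the coordinate that was `a` becomes `a'`) and all still contain `b`. Thus `b` lies on
infinitely many tuples of `Y`, contradicting mutual algebraicity.
-/

/-- `Y ⊆ λ^k` is mutually algebraic if there is `m` such that every `a ∈ λ` occurs as a
coordinate of at most `m` tuples of `Y`. -/
def MutuallyAlgebraic {lam : Type*} {k : ℕ} (Y : Set (Fin k → lam)) : Prop :=
  ∃ m : ℕ, ∀ a : lam,
    {x ∈ Y | ∃ i, x i = a}.Finite ∧ {x ∈ Y | ∃ i, x i = a}.ncard ≤ m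

/-- `Δ_k`, the set of constant `k`-tuples. -/
def Delta (lam : Type*) (k : ℕ) : Set (Fin k → lam) := {x | ∀ i j, x i = x j}

theorem Function.comp_swap_eq_self {α β : Type*} [DecidableEq α] (f : α → β) {a b : α}
    (h : f a = f b) : f ∘ Equiv.swap a b = f := by
  rw [Equiv.comp_swap_eq_update, h, Function.update_eq_self, ← h, Function.update_eq_self]

theorem infinite_setOf_mem_coord_eq_of_swap_invariant {lam β : Type*} {k : ℕ} (c : lam → β)
    {Y : Set (Fin k → lam)}
    (hinv : ∀ σ : Equiv.Perm lam, c ∘ σ = c → ∀ x : Fin k → lam, x ∈ Y ↔ (σ ∘ x) ∈ Y)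
    {x : Fin k → lam} (hx : x ∈ Y) {i j : Fin k} (hinf : (c ⁻¹' {c (x i)}).Infinite)
    (hji : x j ≠ x i) : {y ∈ Y | ∃ l, y l = x j}.Infinite := by
  classical
  set swapped : lam → Fin k → lam := fun a' => Equiv.swap (x i) a' ∘ x
  have hinj : Function.Injective swapped := fun a' a'' h => by
    simpa [swapped] using congrFun h i
  have hmaps : swapped '' ((c ⁻¹' {c (x i)}) \ Set.range x) ⊆ {y ∈ Y | ∃ l, y l = x j} := by
    rintro _ ⟨a', ⟨hc, hnot⟩, rfl⟩
    refine ⟨(hinv _ (Function.comp_swap_eq_self c hc.symm) x).mp hx, j, ?_⟩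
    exact Equiv.swap_apply_of_ne_of_ne hji fun h => hnot ⟨j, h⟩
  exact ((hinf.sdiff (Set.finite_range x)).image hinj.injOn).mono hmaps

theorem stmt1_general {lam : Type*} {N k : ℕ} (c : lam → Fin N)
    {Y : Set (Fin k → lam)} (hY : MutuallyAlgebraic Y)
    (hinv : ∀ σ : Equiv.Perm lam, c ∘ σ = c →
      ∀ x : Fin k → lam, x ∈ Y ↔ (σ ∘ x) ∈ Y) :
    Y ⊆ {x | ∀ i, x i ∈ {a : lam | (c ⁻¹' {c a}).Finite}} ∪ Delta lam k := by
  intro x hx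
  by_contra hmem
  obtain ⟨hnotFinite, hnonconst⟩ := not_or.mp hmem
  obtain ⟨i, hinf⟩ : ∃ i, (c ⁻¹' {c (x i)}).Infinite := by simpa using hnotFinite
  obtain ⟨j, hji⟩ : ∃ j, x j ≠ x i := by
    by_contra! hconst
    exact hnonconst fun p q => (hconst p).trans (hconst q).symm
  obtain ⟨m, hm⟩ := hY
  exact infinite_setOf_mem_coord_eq_of_swap_invariant c hinv hx hinf hji (hm (x j)).1

theorem stmt1 {lam : Type*} [Infinite lam] {N k : ℕ} (c : lam → Fin N)
    {Y : Set (Fin k → lam)} (hY : MutuallyAlgebraic Y)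
    (hinv : ∀ σ : Equiv.Perm lam, c ∘ σ = c →
      ∀ x : Fin k → lam, x ∈ Y ↔ (σ ∘ x) ∈ Y) :
    Y ⊆ {x | ∀ i, x i ∈ {a : lam | (c ⁻¹' {c a}).Finite}} ∪ Delta lam k :=
  stmt1_general c hY hinv
end

section
/- Let λ be a set, k ≥ 2, and let Y ⊆ λ^k be mutually algebraic with Y \ Δ_k infinite. Then there exist indices i ≠ j in {0,…,k−1} and an infinite family ℱ = {ā_n : n ∈ ℕ} ⊆ Y \ Δ_k of pairwise coordinate-disjoint tuples such that for each n, the i-th and j-th coordinates of ā_n are distinct. -/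
open Set Function

theorem exists_ne_and_infinite_of_infinite_diff_Delta {lam : Type*} {k : ℕ} {Y : Set (Fin k → lam)}
    (hinf : (Y \ Delta lam k).Infinite) : ∃ i j, i ≠ j ∧ {x ∈ Y | x i ≠ x j}.Infinite := by
  by_contra! hfin
  have hcover : Y \ Delta lam k ⊆ ⋃ p : Fin k × Fin k, {x ∈ Y | x p.1 ≠ x p.2} := by
    rintro x ⟨hxY, hx⟩
    simp only [Delta, mem_ofPred_eq, not_forall] at hx
    obtain ⟨i, j, hij⟩ := hx
    exact mem_iUnion.2 ⟨(i, j), hxY, hij⟩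
  refine hinf ((finite_iUnion fun p => ?_).subset hcover)
  by_cases hp : p.1 = p.2
  · simp [hp]
  · exact hfin p.1 p.2 hp

theorem MutuallyAlgebraic.finite_not_disjoint_range {lam : Type*} {k : ℕ} {Y : Set (Fin k → lam)}
    (hY : MutuallyAlgebraic Y) {S : Set lam} (hS : S.Finite) :
    {x ∈ Y | ¬Disjoint (range x) S}.Finite := by
  obtain ⟨m, hm⟩ := hY
  refine (hS.biUnion fun a _ => (hm a).1).subset ?_
  rintro x ⟨hxY, hx⟩
  obtain ⟨_, ⟨i, rfl⟩, hi⟩ := not_disjoint_iff.1 hx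
  exact mem_iUnion₂.2 ⟨x i, hi, hxY, i, rfl⟩

theorem exists_seq_pairwise_disjoint_range {ι lam : Type*} [Finite ι] {Z : Set (ι → lam)}
    (hZ : Z.Infinite) (hfin : ∀ S : Set lam, S.Finite → {x ∈ Z | ¬Disjoint (range x) S}.Finite) :
    ∃ F : ℕ → ι → lam, (∀ n, F n ∈ Z) ∧ Pairwise (Disjoint on (range ∘ F)) := by
  let r : (ι → lam) → (ι → lam) → Prop := fun x y => Disjoint (range x) (range y)
  have : Std.Symm r := ⟨fun _ _ h => h.symm⟩
  refine exists_seq_of_forall_finset_exists' (· ∈ Z) r fun s _ => ?_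
  have hS : (⋃ y ∈ s, range y).Finite := s.finite_toSet.biUnion fun y _ => finite_range y
  obtain ⟨x, hxZ, hx⟩ := (hZ.sdiff (hfin _ hS)).nonempty
  refine ⟨x, hxZ, fun y hy => ?_⟩
  have hxS : Disjoint (range x) (⋃ y ∈ s, range y) := by simpa [hxZ] using hx
  exact (hxS.mono_right (subset_biUnion_of_mem (u := fun y => range y) hy)).symm

theorem stmt4_general {lam : Type*} {k : ℕ} {Y : Set (Fin k → lam)}
    (hY : MutuallyAlgebraic Y) (hinf : (Y \ Delta lam k).Infinite) :
    ∃ i j : Fin k, i ≠ j ∧ ∃ F : ℕ → (Fin k → lam),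
      Function.Injective F ∧ (∀ n, F n ∈ Y \ Delta lam k) ∧
      (∀ n m, n ≠ m → ∀ p q, F n p ≠ F m q) ∧
      ∀ n, F n i ≠ F n j := by
  obtain ⟨i, j, hij, hZ⟩ := exists_ne_and_infinite_of_infinite_diff_Delta hinf
  obtain ⟨F, hFZ, hdisj⟩ := exists_seq_pairwise_disjoint_range hZ fun S hS =>
    (hY.finite_not_disjoint_range hS).subset fun x hx => ⟨hx.1.1, hx.2⟩
  have hcoord : ∀ n m, n ≠ m → ∀ p q, F n p ≠ F m q := fun n m hnm =>
    disjoint_range_iff.1 (hdisj hnm)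
  refine ⟨i, j, hij, F, fun n m hnm => ?_, fun n => ⟨(hFZ n).1, fun h => (hFZ n).2 (h i j)⟩,
    hcoord, fun n => (hFZ n).2⟩
  by_contra hne
  exact hcoord n m hne i i (congrFun hnm i)

theorem stmt4 {lam : Type*} {k : ℕ} (hk : 2 ≤ k) {Y : Set (Fin k → lam)}
    (hY : MutuallyAlgebraic Y) (hinf : (Y \ Delta lam k).Infinite) :
    ∃ i j : Fin k, i ≠ j ∧ ∃ F : ℕ → (Fin k → lam),
      Function.Injective F ∧ (∀ n, F n ∈ Y \ Delta lam k) ∧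
      (∀ n m, n ≠ m → ∀ p q, F n p ≠ F m q) ∧
      ∀ n, F n i ≠ F n j :=
  stmt4_general hY hinf
end

section
/- Let A, B, C be countably infinite sets and let φ : A × B → C be a bijection. Then there exists D ⊆ C such that for all distinct a₁, a₂ ∈ A there is a unique b ∈ B with φ(a₁, b) ∈ D and φ(a₂, b) ∈ D. -/
theorem stmt8 {A B C : Type*} [Countable A] [Infinite A] [Countable B] [Infinite B]
    [Countable C] [Infinite C] (φ : A × B → C) (hφ : Function.Bijective φ) :
    ∃ D : Set C, ∀ a₁ a₂ : A, a₁ ≠ a₂ →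
      ∃! b : B, φ (a₁, b) ∈ D ∧ φ (a₂, b) ∈ D := by
  obtain ⟨eA⟩ := nonempty_equiv_of_countable (α := A) (β := ℕ)
  obtain ⟨eB⟩ := nonempty_equiv_of_countable (α := B) (β := ℕ)
  set S : Set (A × B) :=
    {p | ∃ x y : ℕ, x < y ∧ eB p.2 = Nat.pair x y ∧ (eA p.1 = x ∨ eA p.1 = y)} with hS
  refine ⟨φ '' S, fun a₁ a₂ hne => ?_⟩
  have hmem : ∀ p : A × B, φ p ∈ φ '' S ↔ p ∈ S := by
    intro p
    constructor
    · rintro ⟨q, hq, hpq⟩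
      rwa [← hφ.1 hpq]
    · intro h; exact ⟨p, h, rfl⟩
  have hEA : eA a₁ ≠ eA a₂ := fun h => hne (eA.injective h)
  set m := min (eA a₁) (eA a₂) with hm
  set M := max (eA a₁) (eA a₂) with hM
  have hmM : m < M := min_lt_max.mpr hEA
  refine ⟨eB.symm (Nat.pair m M), ?_, ?_⟩
  · constructor
    · rw [hmem]
      refine ⟨m, M, hmM, by simp, ?_⟩
      dsimp only
      rw [hm, hM]; omega
    · rw [hmem]
      refine ⟨m, M, hmM, by simp, ?_⟩
      dsimp only
      rw [hm, hM]; omega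
  · rintro b ⟨h1, h2⟩
    rw [hmem] at h1 h2
    obtain ⟨x, y, hxy, hb, h1'⟩ := h1
    obtain ⟨x', y', hxy', hb', h2'⟩ := h2
    rw [hb] at hb'
    have hx : x = x' := by
      have := congrArg (fun n => n.unpair.1) hb'
      simpa using this
    have hy : y = y' := by
      have := congrArg (fun n => n.unpair.2) hb'
      simpa using this
    subst hx hy
    have hxm : x = m ∧ y = M := by
      dsimp only at h1' h2'
      rw [hm, hM]
      rcases h1' with h1' | h1' <;> rcases h2' with h2' | h2' <;> omega
    apply eB.injective
    rw [hb, hxm.1, hxm.2]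
    simp
end

section
/- Let A, B, C be countably infinite sets, let φ : A × B → C be a bijection, and let G ⊆ A × A be a symmetric irreflexive relation. Then there exists E ⊆ C such that for all distinct a₁, a₂ ∈ A: G(a₁, a₂) holds if and only if there exists b ∈ B with φ(a₁, b) ∈ E and φ(a₂, b) ∈ E. -/
theorem stmt9 {A B C : Type*} [Countable A] [Infinite A] [Countable B] [Infinite B]
    [Countable C] [Infinite C] (φ : A × B → C) (hφ : Function.Bijective φ)
    (G : A → A → Prop) (hsym : ∀ x y, G x y → G y x) (hirr : ∀ x, ¬ G x x) :
    ∃ E : Set C, ∀ a₁ a₂ : A, a₁ ≠ a₂ →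
      (G a₁ a₂ ↔ ∃ b : B, φ (a₁, b) ∈ E ∧ φ (a₂, b) ∈ E) := by
  obtain ⟨eA⟩ := nonempty_equiv_of_countable (α := A) (β := ℕ)
  obtain ⟨eB⟩ := nonempty_equiv_of_countable (α := B) (β := ℕ)
  set E : Set C := { c | ∃ i j : ℕ, i < j ∧ G (eA.symm i) (eA.symm j) ∧
    (c = φ (eA.symm i, eB.symm (Nat.pair i j)) ∨
     c = φ (eA.symm j, eB.symm (Nat.pair i j))) } with hE
  refine ⟨E, fun a₁ a₂ hne => ⟨fun hG => ?_, fun ⟨b, hb₁, hb₂⟩ => ?_⟩⟩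
  · have hij : eA a₁ ≠ eA a₂ := fun h => hne (eA.injective h)
    rcases lt_or_gt_of_ne hij with h | h
    · exact ⟨eB.symm (Nat.pair (eA a₁) (eA a₂)),
        ⟨eA a₁, eA a₂, h, by simpa using hG, Or.inl (by simp)⟩,
        ⟨eA a₁, eA a₂, h, by simpa using hG, Or.inr (by simp)⟩⟩
    · have hG' := hsym _ _ hG
      exact ⟨eB.symm (Nat.pair (eA a₂) (eA a₁)),
        ⟨eA a₂, eA a₁, h, by simpa using hG', Or.inr (by simp)⟩,
        ⟨eA a₂, eA a₁, h, by simpa using hG', Or.inl (by simp)⟩⟩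
  · obtain ⟨i, j, hij, hGij, hc₁⟩ := hb₁
    obtain ⟨i', j', hij', hGij', hc₂⟩ := hb₂
    have key : ∀ {x y : A} {b' : B},
        φ (x, b) = φ (y, b') → x = y ∧ b = b' := by
      intro x y b' h
      have := hφ.1 h
      exact ⟨congrArg Prod.fst this, congrArg Prod.snd this⟩
    have h₁ : (a₁ = eA.symm i ∨ a₁ = eA.symm j) ∧ b = eB.symm (Nat.pair i j) := by
      rcases hc₁ with h | h
      · exact ⟨Or.inl (key h).1, (key h).2⟩
      · exact ⟨Or.inr (key h).1, (key h).2⟩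
    have h₂ : (a₂ = eA.symm i' ∨ a₂ = eA.symm j') ∧ b = eB.symm (Nat.pair i' j') := by
      rcases hc₂ with h | h
      · exact ⟨Or.inl (key h).1, (key h).2⟩
      · exact ⟨Or.inr (key h).1, (key h).2⟩
    have hpair : Nat.pair i j = Nat.pair i' j' := eB.symm.injective (h₁.2 ▸ h₂.2)
    have hii : i = i' ∧ j = j' := Nat.pair_eq_pair.mp hpair
    obtain ⟨rfl, rfl⟩ := hii
    rcases h₁.1 with rfl | rfl <;> rcases h₂.1 with rfl | rfl
    · exact absurd rfl hne
    · exact hGij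
    · exact hsym _ _ hGij
    · exact absurd rfl hne
end

section
/- Let K be a field, V a vector space over K, A ⊆ V a linearly independent set, and G a symmetric relation on A. Let B = {g + h : g, h ∈ A, g ≠ h, and G(g, h)}. Then for all distinct a₁, a₂ ∈ A: a₁ + a₂ ∈ B if and only if G(a₁, a₂). -/
lemma key14 {K V : Type*} [Field K] [AddCommGroup V] [Module K V]
    {A : Set V} (hA : LinearIndependent K ((↑) : A → V))
    {a b c d : V} (ha : a ∈ A) (hb : b ∈ A) (hc : c ∈ A) (hd : d ∈ A)
    (hab : a ≠ b) (hcd : c ≠ d) (h : a + b = c + d) :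
    (a = c ∧ b = d) ∨ (a = d ∧ b = c) := by
  classical
  set l1 : A →₀ K := Finsupp.single ⟨a, ha⟩ 1 + Finsupp.single ⟨b, hb⟩ 1 with hl1
  set l2 : A →₀ K := Finsupp.single ⟨c, hc⟩ 1 + Finsupp.single ⟨d, hd⟩ 1 with hl2
  have htot : Finsupp.linearCombination K ((↑) : A → V) l1 =
      Finsupp.linearCombination K ((↑) : A → V) l2 := by
    simp [hl1, hl2, Finsupp.linearCombination_single, h]
  have heq : l1 = l2 := hA htot
  have hva := DFunLike.congr_fun heq (⟨a, ha⟩ : A)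
  have hvb := DFunLike.congr_fun heq (⟨b, hb⟩ : A)
  simp [hl1, hl2, Finsupp.single_apply, Subtype.ext_iff, hab, Ne.symm hab] at hva hvb
  have h1 : c = a ∨ d = a := by
    by_contra h'
    push_neg at h'
    simp [h'.1, h'.2] at hva
  have h2 : c = b ∨ d = b := by
    by_contra h'
    push_neg at h'
    simp [h'.1, h'.2] at hvb
  rcases h1 with h1 | h1 <;> rcases h2 with h2 | h2
  · exact absurd (h1 ▸ h2 : a = b).symm hab.symm
  · exact Or.inl ⟨h1.symm, h2.symm⟩
  · exact Or.inr ⟨h1.symm, h2.symm⟩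
  · exact absurd (h1 ▸ h2 : a = b).symm hab.symm

theorem stmt14 {K V : Type*} [Field K] [AddCommGroup V] [Module K V]
    {A : Set V} (hA : LinearIndependent K ((↑) : A → V))
    (G : V → V → Prop) (hsym : ∀ x ∈ A, ∀ y ∈ A, G x y → G y x) :
    ∀ a₁ ∈ A, ∀ a₂ ∈ A, a₁ ≠ a₂ →
      (a₁ + a₂ ∈ {v : V | ∃ g ∈ A, ∃ h ∈ A, g ≠ h ∧ G g h ∧ v = g + h} ↔ G a₁ a₂) := by
  intro a₁ h₁ a₂ h₂ hne
  constructor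
  · rintro ⟨g, hg, h, hh, hgh, hG, heq⟩
    rcases key14 hA h₁ h₂ hg hh hne hgh heq with ⟨e1, e2⟩ | ⟨e1, e2⟩
    · rw [e1, e2]; exact hG
    · rw [e1, e2]; exact hsym g hg h hh hG
  · intro hG
    exact ⟨a₁, h₁, a₂, h₂, hne, hG, rfl⟩
end
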